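/- For κ ≥ 1, both real roots x*± = (1/3)(g₄(κ) ± √(g₅(κ))) of the quadratic 3x² - 2g₄(κ)x + g₃(κ)/κ⁹ = 0 satisfy 4/(5κ⁶) ≤ x*₋ and x*₊ ≤ 4/κ³ + 40/κ⁵, where g₄(κ) := 1/κ³ + 5/κ⁵ + 11/κ⁶ + 5/κ⁷ + 1/κ⁸ + 2/κ⁹ + 1/κ¹⁰ and g₅(κ) := 1/κ⁶ + 10/κ⁸ - 2/κ⁹ + 35/κ¹⁰ + 40/κ¹¹ - 5/κ¹² - 1/κ¹³ + 37/κ¹⁴ + 1/κ¹⁵ + 7/κ¹⁶ + 11/κ¹⁷ + 1/κ¹⁹ + 1/κ²⁰. -/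
import Mathlib


noncomputable def g3 (κ : ℝ) : ℝ :=
  8 + 24/κ^2 + 60/κ^3 + 41/κ^4 + 10/κ^5 + 21/κ^6 + 12/κ^7 + 1/κ^8 + 2/κ^9 + 1/κ^10

noncomputable def g4 (κ : ℝ) : ℝ :=
  1/κ^3 + 5/κ^5 + 11/κ^6 + 5/κ^7 + 1/κ^8 + 2/κ^9 + 1/κ^10

noncomputable def g5 (κ : ℝ) : ℝ :=
  1/κ^6 + 10/κ^8 - 2/κ^9 + 35/κ^10 + 40/κ^11 - 5/κ^12 - 1/κ^13 + 37/κ^14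
    + 1/κ^15 + 7/κ^16 + 11/κ^17 + 1/κ^19 + 1/κ^20

theorem stmt_6 (κ : ℝ) (hκ : 1 ≤ κ) :
    (3 * ((1/3) * (g4 κ - Real.sqrt (g5 κ)))^2
      - 2 * g4 κ * ((1/3) * (g4 κ - Real.sqrt (g5 κ))) + g3 κ / κ^9 = 0) ∧
    (3 * ((1/3) * (g4 κ + Real.sqrt (g5 κ)))^2
      - 2 * g4 κ * ((1/3) * (g4 κ + Real.sqrt (g5 κ))) + g3 κ / κ^9 = 0) ∧
    4 / (5 * κ^6) ≤ (1/3) * (g4 κ - Real.sqrt (g5 κ)) ∧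
    (1/3) * (g4 κ + Real.sqrt (g5 κ)) ≤ 4/κ^3 + 40/κ^5 := by
  have hk0 : (0:ℝ) < κ := lt_of_lt_of_le one_pos hκ
  set t : ℝ := 1/κ with htdef
  have ht0 : 0 < t := by positivity
  have ht1 : t ≤ 1 := by
    rw [htdef]; rw [div_le_one hk0]; exact hκ
  have hpow : ∀ n : ℕ, 1/κ^n = t^n := by
    intro n; rw [htdef, one_div, one_div, inv_pow]
  have hg3 : g3 κ = 8 + 24*t^2 + 60*t^3 + 41*t^4 + 10*t^5 + 21*t^6 + 12*t^7
      + t^8 + 2*t^9 + t^10 := by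
    simp only [g3, hpow]; ring
  have hg4 : g4 κ = t^3 + 5*t^5 + 11*t^6 + 5*t^7 + t^8 + 2*t^9 + t^10 := by
    simp only [g4, hpow]; ring
  have hg5 : g5 κ = t^6 + 10*t^8 - 2*t^9 + 35*t^10 + 40*t^11 - 5*t^12 - t^13
      + 37*t^14 + t^15 + 7*t^16 + 11*t^17 + t^19 + t^20 := by
    simp only [g5, hpow]; ring
  have hle : ∀ m n : ℕ, m ≤ n → t^n ≤ t^m := fun m n h =>
    pow_le_pow_of_le_one ht0.le ht1 h
  have hg5nn : 0 ≤ g5 κ := by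
    rw [hg5]
    have h1 := hle 8 9 (by norm_num)
    have h2 := hle 11 12 (by norm_num)
    have h3 := hle 11 13 (by norm_num)
    have p6 : (0:ℝ) < t^6 := pow_pos ht0 6
    have p8 : (0:ℝ) < t^8 := pow_pos ht0 8
    have p10 : (0:ℝ) < t^10 := pow_pos ht0 10
    have p11 : (0:ℝ) < t^11 := pow_pos ht0 11
    have p14 : (0:ℝ) < t^14 := pow_pos ht0 14
    have p15 : (0:ℝ) < t^15 := pow_pos ht0 15
    have p16 : (0:ℝ) < t^16 := pow_pos ht0 16
    have p17 : (0:ℝ) < t^17 := pow_pos ht0 17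
    have p19 : (0:ℝ) < t^19 := pow_pos ht0 19
    have p20 : (0:ℝ) < t^20 := pow_pos ht0 20
    linarith
  set s : ℝ := Real.sqrt (g5 κ) with hsdef
  have hs0 : 0 ≤ s := Real.sqrt_nonneg _
  have hs2 : s^2 = g5 κ := Real.sq_sqrt hg5nn
  have hdiv : g3 κ / κ^9 = g3 κ * t^9 := by
    rw [div_eq_mul_inv, htdef, one_div, inv_pow]
  have hkey : s^2 = (g4 κ)^2 - 3 * (g3 κ / κ^9) := by
    rw [hs2, hg5, hg4, hdiv, hg3]; ring
  refine ⟨by linear_combination hkey/3, by linear_combination hkey/3, ?_, ?_⟩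
  · -- lower bound: s ≤ g4 - 12/5 t^6
    have h46 : 4 / (5*κ^6) = (4/5) * t^6 := by
      rw [htdef]; field_simp
    have hRid : g4 κ - (12/5) * t^6
        = t^3 + 5*t^5 + (43/5)*t^6 + 5*t^7 + t^8 + 2*t^9 + t^10 := by
      rw [hg4]; ring
    have hR : (0:ℝ) ≤ g4 κ - (12/5) * t^6 := by rw [hRid]; positivity
    have hid : (g4 κ - (12/5) * t^6)^2 - g5 κ
        = (96/5)*t^9 + 48*t^11 + (3324/25)*t^12 + 99*t^13 + (126/5)*t^14
          + (267/5)*t^15 + (156/5)*t^16 + 3*t^17 + 6*t^18 + 3*t^19 := by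
      rw [hg4, hg5]; ring
    have hpos : (0:ℝ) ≤ (96/5)*t^9 + 48*t^11 + (3324/25)*t^12 + 99*t^13 + (126/5)*t^14
          + (267/5)*t^15 + (156/5)*t^16 + 3*t^17 + 6*t^18 + 3*t^19 := by positivity
    have hsq : g5 κ ≤ (g4 κ - (12/5) * t^6)^2 := by linarith
    have hss : s ≤ g4 κ - (12/5) * t^6 := by
      calc s ≤ Real.sqrt ((g4 κ - (12/5) * t^6)^2) := Real.sqrt_le_sqrt hsq
        _ = g4 κ - (12/5) * t^6 := Real.sqrt_sq hR
    rw [h46]; linarith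
  · -- upper bound: s ≤ 12 t^3 + 120 t^5 - g4
    have h35 : 4/κ^3 + 40/κ^5 = 4*t^3 + 40*t^5 := by
      rw [htdef]; field_simp
    have hR : (0:ℝ) ≤ 12*t^3 + 120*t^5 - g4 κ := by
      rw [hg4]
      have h1 := hle 5 6 (by norm_num)
      have h2 := hle 5 7 (by norm_num)
      have h3 := hle 5 8 (by norm_num)
      have h4 := hle 5 9 (by norm_num)
      have h5 := hle 5 10 (by norm_num)
      have p3 : (0:ℝ) < t^3 := pow_pos ht0 3
      have p5 : (0:ℝ) < t^5 := pow_pos ht0 5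
      linarith
    have hid : (12*t^3 + 120*t^5 - g4 κ)^2 - g5 κ
        = 120*t^6 + 2520*t^8 - 240*t^9 + 13080*t^10 - 2592*t^11 - 1068*t^12
          - 141*t^13 - 450*t^14 - 177*t^15 + 36*t^16 + 3*t^17 + 6*t^18 + 3*t^19 := by
      rw [hg4, hg5]; ring
    have hsq : g5 κ ≤ (12*t^3 + 120*t^5 - g4 κ)^2 := by
      have h1 := hle 8 9 (by norm_num)
      have h2 := hle 10 11 (by norm_num)
      have h3 := hle 10 12 (by norm_num)
      have h4 := hle 10 13 (by norm_num)
      have h5 := hle 10 14 (by norm_num)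
      have h6 := hle 10 15 (by norm_num)
      have p6 : (0:ℝ) < t^6 := pow_pos ht0 6
      have p8 : (0:ℝ) < t^8 := pow_pos ht0 8
      have p10 : (0:ℝ) < t^10 := pow_pos ht0 10
      have p16 : (0:ℝ) < t^16 := pow_pos ht0 16
      have p17 : (0:ℝ) < t^17 := pow_pos ht0 17
      have p18 : (0:ℝ) < t^18 := pow_pos ht0 18
      have p19 : (0:ℝ) < t^19 := pow_pos ht0 19
      linarith
    have hss : s ≤ 12*t^3 + 120*t^5 - g4 κ := by
      calc s ≤ Real.sqrt ((12*t^3 + 120*t^5 - g4 κ)^2) := Real.sqrt_le_sqrt hsq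
        _ = 12*t^3 + 120*t^5 - g4 κ := Real.sqrt_sq hR
    rw [h35]; linarith
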